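/- The TCUE_N two-point kernel κ_N(θ,θ') defined via the Christoffel–Darboux sum κ_N(θ,θ') = √(W(z)W(w)) Σ_{ℓ=0}^{N−1} ψ_ℓ(z) conj(ψ_ℓ(w)) with weight W(z) = 1 − cos θ (z = e^{iθ}, w = e^{iθ'}) and orthonormal Szegő–Askey polynomials ψ_ℓ(z) = √(2/((ℓ+1)(ℓ+2))) Σ_{j=1}^{ℓ+1} j z^{j−1}, satisfies κ_N(θ,θ') = e^{i(N−1)(θ−θ')/2} [ S_{N+1}(θ−θ') − (1/(N+1)) S_{N+1}(θ) S_{N+1}(θ') ], where S_{N+1}(θ) = sin((N+1)θ/2)/sin(θ/2). -/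

import Mathlib

/-!
Since `ψ_ℓ` has real coefficients, `conj ψ_ℓ(w) = ψ_ℓ(w̄)`. Writing `G_m(x) = ∑_{k<m} x^k`,
one has `(1 - z) ψ_ℓ(z) = c_ℓ (G_{ℓ+1}(z) - (ℓ+1) z^{ℓ+1})` with `c_ℓ² = 2/((ℓ+1)(ℓ+2))`, and the
weighted sum of products of these telescopes in `N` to `G_{N+1}(uv) - G_{N+1}(u) G_{N+1}(v)/(N+1)`.
On the unit circle `G_{N+1}(e^{iφ}) = e^{iNφ/2} S_{N+1}(φ)` and
`1 - e^{iφ} = -2i sin(φ/2) e^{iφ/2}`; the two factors `1 - z`, `1 - w̄` thus cancel against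
`√(W(z)W(w)) = 2 sin(θ/2) sin(θ'/2)` up to the phase `e^{i(θ-θ')/2}`.
-/

open Finset Real

/-- The orthonormal Szegő–Askey polynomials
`ψ_ℓ(z) = √(2/((ℓ+1)(ℓ+2))) Σ_{j=1}^{ℓ+1} j z^{j-1}` for the weight `W(z) = 1 - cos θ`
on the unit circle. -/
noncomputable def szegoAskey (ℓ : ℕ) (z : ℂ) : ℂ :=
  (Real.sqrt (2 / ((ℓ + 1) * (ℓ + 2))) : ℝ) * ∑ j ∈ Finset.Icc 1 (ℓ + 1), (j : ℂ) * z ^ (j - 1)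

/-- The CUE sine kernel `S_m(θ) = sin(mθ/2)/sin(θ/2)`. -/
noncomputable def sineKernel (m : ℕ) (θ : ℝ) : ℝ :=
  Real.sin (m * θ / 2) / Real.sin (θ / 2)

open Complex (I)

theorem sum_Icc_natCast_mul_pow_sub_one {R : Type*} [Semiring R] (n : ℕ) (x : R) :
    ∑ j ∈ Icc 1 n, (j : R) * x ^ (j - 1) = ∑ i ∈ range n, ((i : R) + 1) * x ^ i := by
  rw [← Ico_add_one_right_eq_Icc, sum_Ico_eq_sum_range]
  simp [add_comm]

theorem one_sub_mul_sum_range_succ_mul_pow {R : Type*} [CommRing R] (n : ℕ) (x : R) :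
    (1 - x) * ∑ i ∈ range n, ((i : R) + 1) * x ^ i = ∑ i ∈ range n, x ^ i - n * x ^ n := by
  induction n with
  | zero => simp
  | succ n ih => rw [sum_range_succ, mul_add, ih, sum_range_succ]; push_cast; ring

theorem sum_range_geom_sub_mul_geom_sub_div {K : Type*} [Field K] [CharZero K] (N : ℕ) (u v : K) :
    ∑ ℓ ∈ range N,
        (∑ i ∈ range (ℓ + 1), u ^ i - (ℓ + 1) * u ^ (ℓ + 1)) *
          (∑ i ∈ range (ℓ + 1), v ^ i - (ℓ + 1) * v ^ (ℓ + 1)) / ((ℓ + 1) * (ℓ + 2)) =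
      ∑ k ∈ range (N + 1), (u * v) ^ k -
        (∑ k ∈ range (N + 1), u ^ k) * (∑ k ∈ range (N + 1), v ^ k) / (N + 1) := by
  induction N with
  | zero => simp
  | succ N ih =>
    rw [sum_range_succ, ih, sum_range_succ _ (N + 1), sum_range_succ _ (N + 1),
      sum_range_succ _ (N + 1)]
    have h₁ : (N : K) + 1 ≠ 0 := Nat.cast_add_one_ne_zero N
    have h₂ : (N : K) + 2 ≠ 0 := by exact_mod_cast Nat.succ_ne_zero (N + 1)
    push_cast
    rw [add_assoc (N : K) 1 1, one_add_one_eq_two]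
    field_simp
    ring

theorem one_sub_mul_szegoAskey (ℓ : ℕ) (z : ℂ) :
    (1 - z) * szegoAskey ℓ z =
      (√(2 / ((ℓ + 1) * (ℓ + 2))) : ℝ) * (∑ i ∈ range (ℓ + 1), z ^ i - (ℓ + 1) * z ^ (ℓ + 1)) := by
  rw [szegoAskey, mul_left_comm, sum_Icc_natCast_mul_pow_sub_one,
    one_sub_mul_sum_range_succ_mul_pow]
  push_cast
  ring

theorem one_sub_mul_one_sub_mul_sum_szegoAskey (N : ℕ) (u v : ℂ) :
    (1 - u) * (1 - v) * ∑ ℓ ∈ range N, szegoAskey ℓ u * szegoAskey ℓ v =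
      2 * (∑ k ∈ range (N + 1), (u * v) ^ k -
        (∑ k ∈ range (N + 1), u ^ k) * (∑ k ∈ range (N + 1), v ^ k) / (N + 1)) := by
  rw [← sum_range_geom_sub_mul_geom_sub_div, mul_sum, mul_sum]
  refine sum_congr rfl fun ℓ _ => ?_
  have hsq : ((√(2 / ((ℓ + 1) * (ℓ + 2))) : ℝ) : ℂ) ^ 2 = 2 / ((ℓ + 1) * (ℓ + 2)) := by
    rw [← Complex.ofReal_pow, Real.sq_sqrt (by positivity)]
    push_cast
    ring
  calc (1 - u) * (1 - v) * (szegoAskey ℓ u * szegoAskey ℓ v)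
      = ((1 - u) * szegoAskey ℓ u) * ((1 - v) * szegoAskey ℓ v) := by ring
    _ = _ := by
      rw [one_sub_mul_szegoAskey, one_sub_mul_szegoAskey]
      linear_combination (∑ i ∈ range (ℓ + 1), u ^ i - (ℓ + 1) * u ^ (ℓ + 1)) *
        (∑ i ∈ range (ℓ + 1), v ^ i - (ℓ + 1) * v ^ (ℓ + 1)) * hsq

theorem Complex.exp_I_mul_sub_one (z : ℂ) :
    exp (I * z) - 1 = 2 * I * sin (z / 2) * exp (I * z / 2) := by
  have hsq : exp (I * z) = exp (I * z / 2) ^ 2 := by rw [← exp_nat_mul]; ring_nf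
  have hhalf : exp (z / 2 * I) = exp (I * z / 2) := by ring_nf
  have hinv : exp (-(z / 2) * I) * exp (I * z / 2) = 1 := by rw [← exp_add]; ring_nf; exact exp_zero
  rw [sin, hsq]
  -- `2i sin(z/2) = e^{iz/2} - e^{-iz/2}`
  linear_combination hinv - exp (I * z / 2) * hhalf -
    (exp (-(z / 2) * I) * exp (I * z / 2) - exp (z / 2 * I) * exp (I * z / 2)) * I_sq

theorem sineKernel_neg (m : ℕ) (φ : ℝ) : sineKernel m (-φ) = sineKernel m φ := by
  simp only [sineKernel, mul_neg, neg_div, Real.sin_neg, div_neg, neg_neg]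

theorem geom_sum_exp_I_mul (n : ℕ) {φ : ℝ} (h : Real.sin (φ / 2) ≠ 0) :
    ∑ k ∈ range (n + 1), Complex.exp (I * φ) ^ k =
      Complex.exp (I * φ / 2) ^ n * sineKernel (n + 1) φ := by
  have hsin : Complex.sin (φ / 2) ≠ 0 := by exact_mod_cast h
  have hne : Complex.exp (I * φ) - 1 ≠ 0 := by
    rw [Complex.exp_I_mul_sub_one]
    simp [hsin, Complex.exp_ne_zero]
  have hpow : Complex.exp (I * φ) ^ (n + 1) = Complex.exp (I * ((n + 1) * φ)) := by
    rw [← Complex.exp_nat_mul]; push_cast; ring_nf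
  have hhalf : Complex.exp (I * ((n + 1) * φ) / 2) =
      Complex.exp (I * φ / 2) ^ n * Complex.exp (I * φ / 2) := by
    rw [← pow_succ, ← Complex.exp_nat_mul]; push_cast; ring_nf
  rw [geom_sum_eq (fun h1 => hne (sub_eq_zero.mpr h1)), hpow, Complex.exp_I_mul_sub_one,
    Complex.exp_I_mul_sub_one, hhalf, sineKernel]
  push_cast
  field_simp

theorem starRingEnd_szegoAskey (ℓ : ℕ) (z : ℂ) :
    starRingEnd ℂ (szegoAskey ℓ z) = szegoAskey ℓ (starRingEnd ℂ z) := by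
  simp [szegoAskey, map_sum]

theorem starRingEnd_exp_I_mul_ofReal (φ : ℝ) :
    starRingEnd ℂ (Complex.exp (I * φ)) = Complex.exp (I * (-φ : ℝ)) := by
  rw [← Complex.exp_conj, map_mul, Complex.conj_I, Complex.conj_ofReal]
  push_cast
  ring_nf

theorem Real.sin_half_pos_of_mem_Ioo {θ : ℝ} (h : θ ∈ Set.Ioo 0 (2 * π)) :
    0 < Real.sin (θ / 2) :=
  Real.sin_pos_of_pos_of_lt_pi (by linarith [h.1]) (by linarith [h.2])

theorem sqrt_one_sub_cos_mul_one_sub_cos {θ θ' : ℝ} (h : 0 ≤ Real.sin (θ / 2))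
    (h' : 0 ≤ Real.sin (θ' / 2)) :
    √((1 - Real.cos θ) * (1 - Real.cos θ')) = 2 * Real.sin (θ / 2) * Real.sin (θ' / 2) := by
  have half (x : ℝ) : 1 - Real.cos x = 2 * Real.sin (x / 2) ^ 2 := by
    have := Real.cos_two_mul_eq_one_sub (x / 2)
    rw [mul_div_cancel₀ x two_ne_zero] at this
    linarith
  rw [half, half, ← Real.sqrt_sq (by positivity : 0 ≤ 2 * Real.sin (θ / 2) * Real.sin (θ' / 2))]
  ring_nf

theorem two_mul_sin_mul_sin_mul_sum_szegoAskey_exp (N : ℕ) {θ θ' : ℝ}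
    (hθ : Real.sin (θ / 2) ≠ 0) (hθ' : Real.sin (θ' / 2) ≠ 0)
    (hΔ : Real.sin ((θ - θ') / 2) ≠ 0) :
    (2 * Real.sin (θ / 2) * Real.sin (θ' / 2) : ℝ) *
        ∑ ℓ ∈ range N,
          szegoAskey ℓ (Complex.exp (I * θ)) * szegoAskey ℓ (Complex.exp (I * (-θ' : ℝ)))
      = Complex.exp (I * ((N : ℂ) - 1) * ((θ : ℂ) - (θ' : ℂ)) / 2) *
          ((sineKernel (N + 1) (θ - θ')
            - (1 / (N + 1)) * sineKernel (N + 1) θ * sineKernel (N + 1) θ' : ℝ) : ℂ) := by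
  have hθ'neg : Real.sin (-θ' / 2) ≠ 0 := by rwa [neg_div, Real.sin_neg, neg_ne_zero]
  have hhalf : Complex.exp (I * (θ - θ' : ℝ) / 2) =
      Complex.exp (I * θ / 2) * Complex.exp (I * (-θ' : ℝ) / 2) := by
    rw [← Complex.exp_add]; push_cast; ring_nf
  have hprod : Complex.exp (I * θ) * Complex.exp (I * (-θ' : ℝ)) =
      Complex.exp (I * (θ - θ' : ℝ)) := by
    rw [← Complex.exp_add]; push_cast; ring_nf
  have hphase : Complex.exp (I * ((N : ℂ) - 1) * ((θ : ℂ) - (θ' : ℂ)) / 2) *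
      Complex.exp (I * (θ - θ' : ℝ) / 2) = Complex.exp (I * (θ - θ' : ℝ) / 2) ^ N := by
    rw [← Complex.exp_add, ← Complex.exp_nat_mul]; push_cast; ring_nf
  have hCD := one_sub_mul_one_sub_mul_sum_szegoAskey N
    (Complex.exp (I * θ)) (Complex.exp (I * (-θ' : ℝ)))
  rw [hprod, geom_sum_exp_I_mul N hΔ, geom_sum_exp_I_mul N hθ, geom_sum_exp_I_mul N hθ'neg,
    sineKernel_neg, ← neg_sub _ (1 : ℂ), Complex.exp_I_mul_sub_one, ← neg_sub _ (1 : ℂ),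
    Complex.exp_I_mul_sub_one] at hCD
  set K := ∑ ℓ ∈ range N,
    szegoAskey ℓ (Complex.exp (I * θ)) * szegoAskey ℓ (Complex.exp (I * (-θ' : ℝ)))
  refine mul_left_cancel₀
    (mul_ne_zero two_ne_zero (Complex.exp_ne_zero (I * (θ - θ' : ℝ) / 2))) ?_
  rw [hhalf] at hCD hphase ⊢
  push_cast at hCD hphase ⊢
  rw [neg_div, Complex.sin_neg] at hCD
  set a := Complex.exp (I * θ / 2)
  set b := Complex.exp (I * -θ' / 2)
  -- `(1 - z)(1 - w̄) = 4 sin(θ/2) sin(θ'/2) a b`, and `a b` is the phase `e^{i(θ-θ')/2}`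
  linear_combination hCD + 4 * a * b * Complex.sin (θ / 2) * Complex.sin (θ' / 2) * K * Complex.I_sq
    - 2 * ((sineKernel (N + 1) (θ - θ') : ℂ)
      - 1 / (N + 1) * sineKernel (N + 1) θ * sineKernel (N + 1) θ') * hphase

theorem tcue_kernel_sine_kernel_form_general
    (N : ℕ) (θ θ' : ℝ)
    (hθ : θ ∈ Set.Ioo 0 (2 * π)) (hθ' : θ' ∈ Set.Ioo 0 (2 * π)) (hne : θ ≠ θ') :
    (Real.sqrt ((1 - Real.cos θ) * (1 - Real.cos θ')) : ℝ) *
        ∑ ℓ ∈ Finset.range N,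
          szegoAskey ℓ (Complex.exp (Complex.I * θ)) *
            (starRingEnd ℂ) (szegoAskey ℓ (Complex.exp (Complex.I * θ')))
      = Complex.exp (Complex.I * ((N : ℂ) - 1) * ((θ : ℂ) - (θ' : ℂ)) / 2) *
          ((sineKernel (N + 1) (θ - θ')
            - (1 / (N + 1)) * sineKernel (N + 1) θ * sineKernel (N + 1) θ' : ℝ) : ℂ) := by
  have hs := Real.sin_half_pos_of_mem_Ioo hθ
  have hs' := Real.sin_half_pos_of_mem_Ioo hθ'
  have hΔ : Real.sin ((θ - θ') / 2) ≠ 0 := by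
    intro h0
    have := (Real.sin_eq_zero_iff_of_lt_of_lt (by linarith [hθ.1, hθ'.2])
      (by linarith [hθ.2, hθ'.1])).1 h0
    exact hne (by linarith)
  simp only [starRingEnd_szegoAskey, starRingEnd_exp_I_mul_ofReal]
  rw [sqrt_one_sub_cos_mul_one_sub_cos hs.le hs'.le]
  exact two_mul_sin_mul_sin_mul_sum_szegoAskey_exp N hs.ne' hs'.ne' hΔ

/-- The TCUE two-point kernel, defined via the Christoffel–Darboux sum
`κ_N(θ,θ') = √(W(θ)W(θ')) Σ_{ℓ=0}^{N-1} ψ_ℓ(e^{iθ}) conj(ψ_ℓ(e^{iθ'}))` with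
`W(θ) = 1 - cos θ`, equals
`e^{i(N-1)(θ-θ')/2} [S_{N+1}(θ-θ') - (1/(N+1)) S_{N+1}(θ) S_{N+1}(θ')]`. -/
theorem tcue_kernel_sine_kernel_form
    (N : ℕ) (hN : 1 ≤ N) (θ θ' : ℝ)
    (hθ : θ ∈ Set.Ioo 0 (2 * π)) (hθ' : θ' ∈ Set.Ioo 0 (2 * π)) (hne : θ ≠ θ') :
    (Real.sqrt ((1 - Real.cos θ) * (1 - Real.cos θ')) : ℝ) *
        ∑ ℓ ∈ Finset.range N,
          szegoAskey ℓ (Complex.exp (Complex.I * θ)) *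
            (starRingEnd ℂ) (szegoAskey ℓ (Complex.exp (Complex.I * θ')))
      = Complex.exp (Complex.I * ((N : ℂ) - 1) * ((θ : ℂ) - (θ' : ℂ)) / 2) *
          ((sineKernel (N + 1) (θ - θ')
            - (1 / (N + 1)) * sineKernel (N + 1) θ * sineKernel (N + 1) θ' : ℝ) : ℂ) :=
  tcue_kernel_sine_kernel_form_general N θ θ' hθ hθ' hne
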